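/- arXiv:1912.08478 — 3 statements merged into one kernel-verified Lean document; each statement's English description precedes it below -/
import Mathlib

section
/- Let $-1 \le x_0 < x_1 < 0$, let $\delta_1, \delta_2 > 0$ with $\delta_1 + \delta_2 < 1/2$, and let $f : [x_0, x_1] \to \mathbb{R}$ be measurable with $Z^2 := \sup_{\tilde x \in [x_0,x_1]} (-\tilde x)^{2\delta_1} \int_{x_0}^{\tilde x} |f(x)|^2 (-x)^{2\delta_2}\, dx < \infty$. Then there is a constant $C$, depending only on $\delta_1$ and $\delta_2$ (independent of $f, x_0, x_1, Z$), such that $\int_{x_0}^{x_1} |f(x)|\, dx \le C\, (-x_0)^{1/2 - \delta_1 - \delta_2} Z$. -/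
open MeasureTheory Set
open scoped ENNReal

/-!
Cut `(x₀, x₁]` along the dyadic points `x₀ / 2 ^ k`. The `k`-th piece has length
`B = -x₀ / 2 ^ (k + 1)` and on it `-t ≥ B`, so the Cauchy–Schwarz inequality with weight
`(-t) ^ (2 δ₂)`, together with the hypothesis at the right end `x` of the piece (where
`(-x) ^ (2 δ₁) ≥ B ^ (2 δ₁)`), bounds `∫ |f|` over it by `Z * B ^ α`, `α = 1/2 - δ₁ - δ₂`.
As `α > 0` these bounds form a geometric series, with sum `(2 ^ α - 1)⁻¹ * (-x₀) ^ α * Z`.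
-/

theorem lintegral_sq_le_lintegral_mul_sq_mul_lintegral_inv {α : Type*} [MeasurableSpace α]
    {μ : Measure α} {g w : α → ℝ≥0∞} (hg : AEMeasurable g μ) (hw : AEMeasurable w μ)
    (hw0 : ∀ᵐ x ∂μ, w x ≠ 0) (hwtop : ∀ᵐ x ∂μ, w x ≠ ∞) :
    (∫⁻ x, g x ∂μ) ^ 2 ≤ (∫⁻ x, g x ^ 2 * w x ∂μ) * ∫⁻ x, (w x)⁻¹ ∂μ := by
  set v : α → ℝ≥0∞ := fun x => w x ^ (1 / 2 : ℝ)
  have hsq : ∀ x, v x ^ 2 = w x := fun x => by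
    rw [← ENNReal.rpow_two, ← ENNReal.rpow_mul]; norm_num
  have hsplit : ∫⁻ x, g x ∂μ = ∫⁻ x, (g * v) x * v⁻¹ x ∂μ := by
    refine lintegral_congr_ae ?_
    filter_upwards [hw0, hwtop] with x hx0 hxtop
    simp only [Pi.mul_apply, Pi.inv_apply, v, mul_assoc]
    rw [ENNReal.mul_inv_cancel (by positivity) (by finiteness), mul_one]
  have hv : AEMeasurable v μ := hw.pow_const _
  have hholder := ENNReal.lintegral_mul_le_Lp_mul_Lq μ Real.HolderConjugate.two_two
    (hg.mul hv) hv.inv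
  simp only [Pi.mul_apply, Pi.inv_apply, ENNReal.rpow_two, mul_pow, ← ENNReal.inv_pow, hsq]
    at hholder
  rw [hsplit]
  calc _ ≤ ((∫⁻ x, g x ^ 2 * w x ∂μ) ^ (1 / 2 : ℝ) * (∫⁻ x, (w x)⁻¹ ∂μ) ^ (1 / 2 : ℝ)) ^ 2 :=
        pow_le_pow_left₀ (by positivity) hholder 2
    _ = _ := by
      rw [← ENNReal.mul_rpow_of_nonneg _ _ (by norm_num), ← ENNReal.rpow_natCast,
        ← ENNReal.rpow_mul]
      norm_num

theorem setLIntegral_inv_rpow_neg_le {μ : Measure ℝ} {s : Set ℝ} {B p : ℝ} (hB : 0 < B)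
    (hp : 0 ≤ p) (hBt : ∀ t ∈ s, B ≤ -t) (hvol : μ s ≤ ENNReal.ofReal B) :
    ∫⁻ t in s, (ENNReal.ofReal ((-t) ^ p))⁻¹ ∂μ ≤ ENNReal.ofReal (B ^ (1 - p)) :=
  calc ∫⁻ t in s, (ENNReal.ofReal ((-t) ^ p))⁻¹ ∂μ
      ≤ ∫⁻ _ in s, ENNReal.ofReal (B ^ (-p)) ∂μ := by
        refine setLIntegral_mono measurable_const fun t ht => ?_
        have ht0 : 0 < -t := hB.trans_le (hBt t ht)
        rw [← ENNReal.ofReal_inv_of_pos (Real.rpow_pos_of_pos ht0 _), ← Real.rpow_neg ht0.le]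
        exact ENNReal.ofReal_le_ofReal <| Real.rpow_le_rpow_of_nonpos hB (hBt t ht) (by linarith)
    _ ≤ ENNReal.ofReal (B ^ (-p)) * ENNReal.ofReal B := by
        rw [setLIntegral_const]; gcongr
    _ = ENNReal.ofReal (B ^ (1 - p)) := by
        rw [← ENNReal.ofReal_mul (by positivity), sub_eq_neg_add, Real.rpow_add hB, Real.rpow_one]

theorem setLIntegral_abs_le_of_weighted_sq_le {δ₁ δ₂ x₀ x B Z : ℝ} (hδ₁ : 0 ≤ δ₁)
    (hδ₂ : 0 ≤ δ₂) (hB : 0 < B) (hBx : B ≤ -x) (hZ : 0 ≤ Z) {f : ℝ → ℝ} (hf : Measurable f)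
    {s : Set ℝ} (hs : MeasurableSet s) (hsx : s ⊆ Ioc x₀ x) (hvol : volume s ≤ ENNReal.ofReal B)
    (hfx : ENNReal.ofReal ((-x) ^ (2 * δ₁)) *
        ∫⁻ t in Ioc x₀ x, ENNReal.ofReal (|f t| ^ 2 * (-t) ^ (2 * δ₂)) ≤ ENNReal.ofReal (Z ^ 2)) :
    ∫⁻ t in s, ENNReal.ofReal |f t| ≤ ENNReal.ofReal (Z * B ^ (1 / 2 - δ₁ - δ₂)) := by
  have hBt : ∀ t ∈ s, B ≤ -t := fun t ht => hBx.trans (by linarith [(hsx ht).2])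
  have hcs := lintegral_sq_le_lintegral_mul_sq_mul_lintegral_inv (μ := volume.restrict s)
    hf.abs.ennreal_ofReal.aemeasurable
    (measurable_neg.pow_const (2 * δ₂)).ennreal_ofReal.aemeasurable
    ((ae_restrict_iff' hs).2 <| .of_forall fun t ht => by
      simpa using Real.rpow_pos_of_pos (hB.trans_le (hBt t ht)) _)
    (.of_forall fun _ => ENNReal.ofReal_ne_top)
  have hBpos : 0 < B ^ (2 * δ₁) := Real.rpow_pos_of_pos hB _
  have hweighted : ∫⁻ t in s, ENNReal.ofReal |f t| ^ 2 * ENNReal.ofReal ((-t) ^ (2 * δ₂)) ≤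
      ENNReal.ofReal (Z ^ 2 / B ^ (2 * δ₁)) := by
    rw [ENNReal.ofReal_div_of_pos hBpos, ENNReal.le_div_iff_mul_le
      (.inl (by simpa using hBpos)) (.inl ENNReal.ofReal_ne_top), mul_comm]
    refine le_trans (mul_le_mul' (ENNReal.ofReal_le_ofReal ?_)
      (le_of_eq_of_le ?_ (lintegral_mono_set hsx))) hfx
    · exact Real.rpow_le_rpow hB.le hBx (by positivity)
    · exact setLIntegral_congr_fun hs fun t _ => by
        rw [ENNReal.ofReal_mul (by positivity), ENNReal.ofReal_pow (abs_nonneg _)]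
  have halg : Z ^ 2 / B ^ (2 * δ₁) * B ^ (1 - 2 * δ₂) = (Z * B ^ (1 / 2 - δ₁ - δ₂)) ^ 2 := by
    rw [mul_pow, ← Real.rpow_natCast (B ^ _), ← Real.rpow_mul hB.le, div_eq_mul_inv,
      ← Real.rpow_neg hB.le, mul_assoc, ← Real.rpow_add hB]
    ring_nf
  rw [← ENNReal.pow_le_pow_left_iff two_ne_zero, ← ENNReal.ofReal_pow (by positivity), ← halg,
    ENNReal.ofReal_mul (by positivity)]
  exact hcs.trans (mul_le_mul' hweighted
    (setLIntegral_inv_rpow_neg_le hB (by positivity) hBt hvol))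

theorem Ico_subset_iUnion_Ico_div_two_pow (x₀ : ℝ) :
    Ico x₀ 0 ⊆ ⋃ k : ℕ, Ico (x₀ / 2 ^ k) (x₀ / 2 ^ (k + 1)) := by
  rintro x ⟨hx₀x, hx⟩
  obtain ⟨k, hk, hk'⟩ := exists_nat_pow_near ((one_le_div_of_neg hx).2 hx₀x) one_lt_two
  refine mem_iUnion.2 ⟨k, ?_, ?_⟩
  · rw [le_div_iff_of_neg hx] at hk
    rw [div_le_iff₀ (by positivity)]
    linarith
  · rw [div_lt_iff_of_neg hx] at hk'
    rw [lt_div_iff₀ (by positivity)]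
    linarith

theorem hasSum_div_two_pow_succ_rpow {y α : ℝ} (hy : 0 ≤ y) (hα : 0 < α) :
    HasSum (fun k : ℕ => (y / 2 ^ (k + 1)) ^ α) ((2 ^ α - 1)⁻¹ * y ^ α) := by
  set r : ℝ := (2 ^ α)⁻¹
  have h2α : 1 < (2 : ℝ) ^ α := Real.one_lt_rpow one_lt_two hα
  have hr : r < 1 := inv_lt_one_of_one_lt₀ h2α
  have hterm : ∀ k : ℕ, (y / 2 ^ (k + 1)) ^ α = y ^ α * r * r ^ k := fun k => by
    rw [Real.div_rpow hy (by positivity), ← Real.rpow_natCast, ← Real.rpow_mul zero_le_two,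
      mul_comm, Real.rpow_mul zero_le_two, Real.rpow_natCast]
    simp only [r, inv_pow]
    ring
  have hsum : y ^ α * r * (1 - r)⁻¹ = (2 ^ α - 1)⁻¹ * y ^ α := by
    simp only [r]
    field_simp
  simpa only [hterm, hsum] using
    (hasSum_geometric_of_lt_one (by positivity) hr).mul_left (y ^ α * r)

theorem setLIntegral_abs_inter_Ico_div_two_pow_le {δ₁ δ₂ x₀ x₁ Z : ℝ} (hδ₁ : 0 ≤ δ₁)
    (hδ₂ : 0 ≤ δ₂) (hx₀ : x₀ < 0) (hx₀₁ : x₀ ≤ x₁) (hZ : 0 ≤ Z) {f : ℝ → ℝ} (hf : Measurable f)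
    (hfZ : ∀ x ∈ Icc x₀ x₁, ENNReal.ofReal ((-x) ^ (2 * δ₁)) *
        ∫⁻ t in Ioc x₀ x, ENNReal.ofReal (|f t| ^ 2 * (-t) ^ (2 * δ₂)) ≤ ENNReal.ofReal (Z ^ 2))
    (k : ℕ) :
    ∫⁻ t in Ioc x₀ x₁ ∩ Ico (x₀ / 2 ^ k) (x₀ / 2 ^ (k + 1)), ENNReal.ofReal |f t| ≤
      ENNReal.ofReal (Z * (-x₀ / 2 ^ (k + 1)) ^ (1 / 2 - δ₁ - δ₂)) := by
  have hx₀k : x₀ ≤ x₀ / 2 ^ (k + 1) := by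
    rw [le_div_iff₀ (by positivity)]
    nlinarith [one_le_pow₀ (M₀ := ℝ) one_le_two (n := k + 1)]
  have hlen : x₀ / 2 ^ (k + 1) - x₀ / 2 ^ k = -x₀ / 2 ^ (k + 1) := by
    rw [pow_succ]; field_simp; ring
  refine setLIntegral_abs_le_of_weighted_sq_le (x := min x₁ (x₀ / 2 ^ (k + 1))) hδ₁ hδ₂
    (div_pos (neg_pos.2 hx₀) (by positivity)) ?_ hZ hf (measurableSet_Ioc.inter measurableSet_Ico)
    (fun t ht => ⟨ht.1.1, le_min ht.1.2 ht.2.2.le⟩) ?_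
    (hfZ _ ⟨le_min hx₀₁ hx₀k, min_le_left _ _⟩)
  · rw [neg_div]
    exact neg_le_neg (min_le_right _ _)
  · calc volume (Ioc x₀ x₁ ∩ Ico (x₀ / 2 ^ k) (x₀ / 2 ^ (k + 1)))
        ≤ volume (Ico (x₀ / 2 ^ k) (x₀ / 2 ^ (k + 1))) := measure_mono inter_subset_right
      _ = ENNReal.ofReal (-x₀ / 2 ^ (k + 1)) := by rw [Real.volume_Ico, hlen]

/-- Dyadic weighted `L¹` bound from a weighted `L²` bound (Lemma on `[-1,0)`). -/
theorem dyadic_weighted_L1_bound (δ₁ δ₂ : ℝ) (hδ₁ : 0 < δ₁) (hδ₂ : 0 < δ₂)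
    (hsum : δ₁ + δ₂ < 1 / 2) :
    ∃ C : ℝ, 0 < C ∧
      ∀ (x₀ x₁ : ℝ) (f : ℝ → ℝ) (Z : ℝ),
        -1 ≤ x₀ → x₀ < x₁ → x₁ < 0 → Measurable f → 0 ≤ Z →
        (∀ x ∈ Icc x₀ x₁,
          ENNReal.ofReal ((-x) ^ (2 * δ₁)) *
              ∫⁻ t in Ioc x₀ x, ENNReal.ofReal (|f t| ^ 2 * (-t) ^ (2 * δ₂)) ≤
            ENNReal.ofReal (Z ^ 2)) →
        ∫⁻ t in Ioc x₀ x₁, ENNReal.ofReal |f t| ≤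
          ENNReal.ofReal (C * (-x₀) ^ (1 / 2 - δ₁ - δ₂) * Z) := by
  have hα : 0 < 1 / 2 - δ₁ - δ₂ := by linarith
  refine ⟨(2 ^ (1 / 2 - δ₁ - δ₂) - 1)⁻¹,
    inv_pos.2 (sub_pos.2 (Real.one_lt_rpow one_lt_two hα)), ?_⟩
  intro x₀ x₁ f Z _ hx₀₁ hx₁ hf hZ hfZ
  have hx₀ : x₀ < 0 := hx₀₁.trans hx₁
  have hcover : Ioc x₀ x₁ ⊆ ⋃ k : ℕ, Ioc x₀ x₁ ∩ Ico (x₀ / 2 ^ k) (x₀ / 2 ^ (k + 1)) :=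
    fun t ht => by
      rw [← inter_iUnion]
      exact ⟨ht, Ico_subset_iUnion_Ico_div_two_pow x₀ ⟨ht.1.le, ht.2.trans_lt hx₁⟩⟩
  have hy : 0 ≤ -x₀ := by linarith
  have hgeom := (hasSum_div_two_pow_succ_rpow hy hα).mul_left Z
  calc ∫⁻ t in Ioc x₀ x₁, ENNReal.ofReal |f t|
      ≤ ∑' k : ℕ, ∫⁻ t in Ioc x₀ x₁ ∩ Ico (x₀ / 2 ^ k) (x₀ / 2 ^ (k + 1)), ENNReal.ofReal |f t| :=
        (lintegral_mono_set hcover).trans (lintegral_iUnion_le _ _)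
    _ ≤ ∑' k : ℕ, ENNReal.ofReal (Z * (-x₀ / 2 ^ (k + 1)) ^ (1 / 2 - δ₁ - δ₂)) :=
        ENNReal.tsum_le_tsum fun k => setLIntegral_abs_inter_Ico_div_two_pow_le hδ₁.le hδ₂.le hx₀
          hx₀₁.le hZ hf hfZ k
    _ = _ := by
        rw [← ENNReal.ofReal_tsum_of_nonneg
          (fun k => mul_nonneg hZ (Real.rpow_nonneg (div_nonneg hy (by positivity)) _))
          hgeom.summable, hgeom.tsum_eq]
        ring_nf
end

section
/- Let $0 < \gamma < \pi/8$ and let $a : [0,\pi] \to [0,1]$ be continuous with $a(\theta) = 1$ for $\theta \in [2\gamma, \pi - 2\gamma]$ and $a(\theta) = 0$ for $\theta \in [0,\gamma] \cup [\pi-\gamma, \pi]$. With $I := \int_0^{\pi} a^2 \sin$ and $h(\theta) := \frac{1}{2\sin\theta}\big[\int_0^{\theta} a^2\sin - I\frac{1-\cos\theta}{2}\big]$, one has the global bound $|\sin(\theta)\, h(\theta)| \le 2(1 - \cos(2\gamma)) \le 4\gamma^2$ for all $\theta \in (0,\pi)$. -/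
/-! Write `a² sin = (a² - 1) sin + sin`. The `sin` part integrates to `1 - cos θ` and cancels
exactly against the correction term `I (1 - cos θ) / 2`, so `2 sin θ · h(θ) = G(θ) - G(π) (1 - cos θ) / 2`
with `G(θ) = ∫₀^θ (a² - 1) sin`. Since `|a² - 1| ≤ 1` and `a² - 1` vanishes on `[2γ, π - 2γ]`,
`|G| ≤ ∫₀^{2γ} sin + ∫_{π-2γ}^π sin = 2 (1 - cos 2γ)`. -/

open Real Set MeasureTheory intervalIntegral

lemma integral_abs_le_two_mul_one_sub_cos {f : ℝ → ℝ} {c : ℝ} (hc0 : 0 ≤ c) (hcπ : c ≤ π - c)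
    (hf : IntervalIntegrable f volume 0 π) (hf_le : ∀ x ∈ Icc 0 π, |f x| ≤ sin x)
    (hf_zero : ∀ x ∈ Icc c (π - c), f x = 0) :
    ∫ x in 0..π, |f x| ≤ 2 * (1 - cos c) := by
  have hsub : ∀ u v, 0 ≤ u → u ≤ v → v ≤ π →
      IntervalIntegrable (fun x => |f x|) volume u v := fun _ _ hu huv hv =>
    hf.abs.mono_set (by rw [uIcc_of_le huv, uIcc_of_le (by linarith)]; exact Icc_subset_Icc hu hv)
  have hsin_bound : ∀ u v, 0 ≤ u → u ≤ v → v ≤ π →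
      ∫ x in u..v, |f x| ≤ cos u - cos v := fun u v hu huv hv => by
    rw [← integral_sin]
    exact integral_mono_on huv (hsub u v hu huv hv) (continuous_sin.intervalIntegrable _ _)
      fun x hx => hf_le x ⟨hu.trans hx.1, hx.2.trans hv⟩
  have hmid : ∫ x in c..π - c, |f x| = 0 := by
    rw [integral_congr (g := fun _ => 0) fun x hx => by
      simp only [hf_zero x (uIcc_of_le hcπ ▸ hx), abs_zero]]
    exact integral_zero
  have hleft := hsin_bound 0 c le_rfl hc0 (by linarith)
  have hright := hsin_bound (π - c) π (by linarith) (by linarith) le_rfl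
  rw [cos_zero] at hleft
  rw [cos_pi_sub, cos_pi] at hright
  rw [← integral_add_adjacent_intervals (hsub 0 (π - c) le_rfl (by linarith) (by linarith))
      (hsub (π - c) π (by linarith) (by linarith) le_rfl),
    ← integral_add_adjacent_intervals (hsub 0 c le_rfl hc0 (by linarith))
      (hsub c (π - c) hc0 hcπ (by linarith)), hmid]
  linarith

lemma abs_integral_le_integral_abs_of_mem_Icc {f : ℝ → ℝ} {a b θ : ℝ}
    (hf : IntervalIntegrable f volume a b) (hθ : θ ∈ Icc a b) :
    |∫ x in a..θ, f x| ≤ ∫ x in a..b, |f x| :=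
  (abs_integral_le_integral_abs hθ.1).trans <|
    integral_mono_interval le_rfl hθ.1 hθ.2 (.of_forall fun _ => abs_nonneg _) hf.abs

lemma integral_mul_sin_eq {b : ℝ → ℝ} {θ : ℝ}
    (hb : IntervalIntegrable (fun x => (b x - 1) * sin x) volume 0 θ) :
    ∫ x in 0..θ, b x * sin x = (∫ x in 0..θ, (b x - 1) * sin x) + (1 - cos θ) := by
  rw [show 1 - cos θ = ∫ x in 0..θ, sin x by rw [integral_sin, cos_zero],
    ← integral_add hb (continuous_sin.intervalIntegrable _ _)]
  congr 1 with x
  ring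

lemma abs_sub_mul_div_two_le {x y t B : ℝ} (hx : |x| ≤ B) (hy : |y| ≤ B) (ht : t ∈ Icc 0 1) :
    |(x - y * t) / 2| ≤ B := by
  have hyt : |y * t| ≤ B := by
    rw [abs_mul, abs_of_nonneg ht.1]
    nlinarith [abs_nonneg y, ht.2]
  rw [abs_div, abs_two, div_le_iff₀ two_pos]
  linarith [abs_sub x (y * t)]

theorem h_global_bound_general (γ : ℝ) (hγ0 : 0 < γ) (hγ : γ < π / 8)
    (a : ℝ → ℝ) (ha : ContinuousOn a (Icc 0 π))
    (harange : ∀ θ ∈ Icc (0:ℝ) π, a θ ∈ Icc (0:ℝ) 1)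
    (haone : ∀ θ ∈ Icc (2 * γ) (π - 2 * γ), a θ = 1) :
    (∀ θ ∈ Ioo (0:ℝ) π,
      |Real.sin θ *
          (1 / (2 * Real.sin θ) *
            ((∫ x in (0:ℝ)..θ, (a x) ^ 2 * Real.sin x) -
              (∫ x in (0:ℝ)..π, (a x) ^ 2 * Real.sin x) * ((1 - Real.cos θ) / 2)))| ≤
        2 * (1 - Real.cos (2 * γ))) ∧
    2 * (1 - Real.cos (2 * γ)) ≤ 4 * γ ^ 2 := by
  set f : ℝ → ℝ := fun x => (a x ^ 2 - 1) * sin x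
  have hf : IntervalIntegrable f volume 0 π :=
    (((ha.pow 2).sub continuousOn_const).mul continuous_sin.continuousOn).intervalIntegrable_of_Icc
      pi_pos.le
  have hf_le : ∀ x ∈ Icc 0 π, |f x| ≤ sin x := fun x hx => by
    obtain ⟨ha0, ha1⟩ := harange x hx
    rw [abs_mul, abs_of_nonneg (sin_nonneg_of_nonneg_of_le_pi hx.1 hx.2)]
    exact mul_le_of_le_one_left (sin_nonneg_of_nonneg_of_le_pi hx.1 hx.2)
      (abs_le.2 ⟨by nlinarith, by nlinarith⟩)
  have hB := integral_abs_le_two_mul_one_sub_cos (c := 2 * γ) (by linarith) (by linarith) hf hf_le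
    fun x hx => by simp only [f, haone x hx]; ring
  have hG : ∀ θ ∈ Icc 0 π, |∫ x in 0..θ, f x| ≤ 2 * (1 - cos (2 * γ)) := fun θ hθ =>
    (abs_integral_le_integral_abs_of_mem_Icc hf hθ).trans hB
  refine ⟨fun θ hθ => ?_, by nlinarith [one_sub_sq_div_two_le_cos (x := 2 * γ)]⟩
  have hθ' : θ ∈ Icc 0 π := Ioo_subset_Icc_self hθ
  have hsin : sin θ ≠ 0 := (sin_pos_of_pos_of_lt_pi hθ.1 hθ.2).ne'
  rw [integral_mul_sin_eq (b := fun x => a x ^ 2) (hf.mono_set (by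
      rw [uIcc_of_le hθ'.1, uIcc_of_le pi_pos.le]; exact Icc_subset_Icc le_rfl hθ'.2)),
    integral_mul_sin_eq (b := fun x => a x ^ 2) hf, cos_pi]
  convert abs_sub_mul_div_two_le (hG θ hθ') (hG π ⟨pi_pos.le, le_rfl⟩) (t := (1 - cos θ) / 2)
    ⟨by linarith [cos_le_one θ], by linarith [neg_one_le_cos θ]⟩ using 2
  field_simp
  ring

/-- Global bound `|sin θ · h(θ)| ≤ 2(1 - cos 2γ) ≤ 4γ²`. -/
theorem h_global_bound (γ : ℝ) (hγ0 : 0 < γ) (hγ : γ < π / 8)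
    (a : ℝ → ℝ) (ha : ContinuousOn a (Icc 0 π))
    (harange : ∀ θ ∈ Icc (0:ℝ) π, a θ ∈ Icc (0:ℝ) 1)
    (haone : ∀ θ ∈ Icc (2 * γ) (π - 2 * γ), a θ = 1)
    (hazero : ∀ θ ∈ Icc (0:ℝ) γ ∪ Icc (π - γ) π, a θ = 0) :
    (∀ θ ∈ Ioo (0:ℝ) π,
      |Real.sin θ *
          (1 / (2 * Real.sin θ) *
            ((∫ x in (0:ℝ)..θ, (a x) ^ 2 * Real.sin x) -
              (∫ x in (0:ℝ)..π, (a x) ^ 2 * Real.sin x) * ((1 - Real.cos θ) / 2)))| ≤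
        2 * (1 - Real.cos (2 * γ))) ∧
    2 * (1 - Real.cos (2 * γ)) ≤ 4 * γ ^ 2 :=
  h_global_bound_general γ hγ0 hγ a ha harange haone
end

section
/- Let $a > 1$, $A \ge 0$, and let $f : [-1, 0) \to \mathbb{R}$ be continuous with $|f(u)| \le A\, u^{-2}$ for all $u \in [-1,0)$. For $y_0 \in \mathbb{R}$ let $y_{y_0}$ denote the unique solution on $[-1,0)$ of the ODE $y'(u) + \frac{a}{u} y(u) = f(u)$ with $y(-1) = y_0$. Then: (i) there is exactly one choice of $y_0$, namely $y_0 = -\int_{-1}^{0} (-s)^a f(s)\, ds$, for which $\sup_{u \in [-1,0)} |u\, y_{y_0}(u)| < \infty$; (ii) for this choice one has $|y_{y_0}(u)| \le \frac{A}{a-1} |u|^{-1}$ for all $u \in [-1,0)$; and (iii) for every other choice of $y_0$, $\limsup_{u \to 0^-} |u|^{a} |y_{y_0}(u)| > 0$, so $y_{y_0}$ blows up at the faster rate $|u|^{-a}$. -/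
/-!
Multiplying by the integrating factor `(-u)^a` turns the equation into
`((-u)^a y)' = (-u)^a f`, whose right side is bounded by `A (-u)^(a-2)` and so is integrable up
to `0` because `a > 1`. Integrating from `u` to `0` gives
`|(-u)^a y(u) - c| ≤ A/(a-1) (-u)^(a-1)` with `c = y(-1) + ∫_{-1}^0 (-s)^a f(s) ds`.
Hence `(-u)^a y(u) → c`: if `c ≠ 0`, then `|u|^a |y(u)| → |c| > 0` and `u y(u)` is unbounded,
while if `c = 0` the estimate is itself the bound `|y(u)| ≤ A/(a-1) |u|⁻¹`.
-/

open Set MeasureTheory Filter Topology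

theorem integrableOn_Ioo_neg_rpow {b : ℝ} (hb : -1 < b) (u : ℝ) :
    IntegrableOn (fun s : ℝ => (-s) ^ b) (Ioo u 0) := by
  have h := (IntervalIntegrable.iff_comp_neg).mp
    (intervalIntegral.intervalIntegrable_rpow' hb (a := 0) (b := -u))
  rw [neg_zero, neg_neg] at h
  exact h.symm.def'.mono_set (Ioo_subset_Ioc_self.trans Ioc_subset_uIoc)

theorem integral_Ioo_neg_rpow {b u : ℝ} (hb : -1 < b) (hu : u ≤ 0) :
    ∫ s in Ioo u 0, (-s) ^ b = (-u) ^ (b + 1) / (b + 1) := by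
  rw [← integral_Ioc_eq_integral_Ioo, ← intervalIntegral.integral_of_le hu,
    intervalIntegral.integral_comp_neg (fun s => s ^ b), neg_zero,
    integral_rpow (Or.inl hb), Real.zero_rpow (by linarith), sub_zero]

theorem abs_setIntegral_Ioo_le_of_abs_le_rpow {h : ℝ → ℝ} {a A u : ℝ} (ha : 1 < a)
    (hu : u ≤ 0) (hh : ∀ s ∈ Ioo u 0, |h s| ≤ A * (-s) ^ (a - 2)) :
    |∫ s in Ioo u 0, h s| ≤ A / (a - 1) * (-u) ^ (a - 1) := by
  have hb : -1 < a - 2 := by linarith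
  calc |∫ s in Ioo u 0, h s|
      ≤ ∫ s in Ioo u 0, A * (-s) ^ (a - 2) :=
        norm_integral_le_of_norm_le (f := h) ((integrableOn_Ioo_neg_rpow hb u).const_mul A)
          (ae_restrict_of_forall_mem measurableSet_Ioo hh)
    _ = A / (a - 1) * (-u) ^ (a - 1) := by
        rw [integral_const_mul, integral_Ioo_neg_rpow hb hu, show a - 2 + 1 = a - 1 by ring]
        ring

theorem eq_add_setIntegral_Ioo_sub_setIntegral_Ioo {g h : ℝ → ℝ} {l r u : ℝ}
    (hg : ∀ x ∈ Ico l r, HasDerivWithinAt g (h x) (Ico l r) x)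
    (hh : IntegrableOn h (Ioo l r)) (hu : u ∈ Ico l r) :
    g u = g l + (∫ s in Ioo l r, h s) - ∫ s in Ioo u r, h s := by
  have hIcc : Icc l u ⊆ Ico l r := Icc_subset_Ico_right hu.2
  have hftc : ∫ s in l..u, h s = g u - g l := by
    refine intervalIntegral.integral_eq_sub_of_hasDeriv_right_of_le hu.1
      (fun x hx => (hg x (hIcc hx)).continuousWithinAt.mono hIcc) (fun x hx => ?_)
      ((intervalIntegrable_iff_integrableOn_Ioc_of_le hu.1).mpr
        (hh.mono_set (Ioc_subset_Ioo_right hu.2)))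
    have hx' : x ∈ Ioo l r := ⟨hx.1, hx.2.trans hu.2⟩
    exact ((hg x (Ioo_subset_Ico_self hx')).hasDerivAt
      (mem_of_superset (isOpen_Ioo.mem_nhds hx') Ioo_subset_Ico_self)).hasDerivWithinAt
  have hsplit : ∫ s in Ioo l r, h s = (∫ s in Ioc l u, h s) + ∫ s in Ioo u r, h s := by
    rw [← Ioc_union_Ioo_eq_Ioo hu.1 hu.2, setIntegral_union
      (disjoint_left.mpr fun x hx hx' => hx'.1.not_ge hx.2) measurableSet_Ioo
      (hh.mono_set (Ioc_subset_Ioo_right hu.2)) (hh.mono_set (Ioo_subset_Ioo_left hu.1))]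
  rw [intervalIntegral.integral_of_le hu.1] at hftc
  linarith

theorem HasDerivWithinAt.neg_rpow_mul {y : ℝ → ℝ} {s : Set ℝ} {a c u : ℝ} (hu : u < 0)
    (hy : HasDerivWithinAt y (c - a / u * y u) s u) :
    HasDerivWithinAt (fun v => (-v) ^ a * y v) ((-u) ^ a * c) s u := by
  have hnu : 0 < -u := neg_pos.mpr hu
  have hfactor : HasDerivAt (fun v : ℝ => (-v) ^ a) (a * (-u) ^ (a - 1) * (-1)) u :=
    (Real.hasDerivAt_rpow_const (Or.inl hnu.ne')).comp u (hasDerivAt_neg u)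
  refine (hfactor.hasDerivWithinAt.mul hy).congr_deriv ?_
  rw [Real.rpow_sub_one hnu.ne']
  field_simp
  ring

theorem abs_neg_rpow_mul_le_of_abs_le_div_sq {f : ℝ → ℝ} {a A s : ℝ} (hs : s < 0)
    (hf : |f s| ≤ A / s ^ 2) :
    |(-s) ^ a * f s| ≤ A * (-s) ^ (a - 2) := by
  have hns : 0 < -s := neg_pos.mpr hs
  rw [abs_mul, abs_of_pos (Real.rpow_pos_of_pos hns a), Real.rpow_sub hns, Real.rpow_two,
    neg_sq, mul_div_assoc', mul_comm A]
  exact mul_le_mul_of_nonneg_left hf (Real.rpow_nonneg hns.le a) |>.trans_eq (by ring)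

theorem abs_neg_rpow_mul_sub_le_of_hasDerivWithinAt {a A : ℝ} (ha : 1 < a) {f y : ℝ → ℝ}
    (hf : ContinuousOn f (Ico (-1 : ℝ) 0)) (hfb : ∀ u ∈ Ico (-1 : ℝ) 0, |f u| ≤ A / u ^ 2)
    (hy : ∀ u ∈ Ico (-1 : ℝ) 0, HasDerivWithinAt y (f u - a / u * y u) (Ico (-1 : ℝ) 0) u) :
    ∀ u ∈ Ico (-1 : ℝ) 0,
      |(-u) ^ a * y u - (y (-1) + ∫ s in Ioo (-1 : ℝ) 0, (-s) ^ a * f s)|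
        ≤ A / (a - 1) * (-u) ^ (a - 1) := by
  have hbound : ∀ s ∈ Ico (-1 : ℝ) 0, |(-s) ^ a * f s| ≤ A * (-s) ^ (a - 2) :=
    fun s hs => abs_neg_rpow_mul_le_of_abs_le_div_sq hs.2 (hfb s hs)
  have hcont : ContinuousOn (fun s : ℝ => (-s) ^ a * f s) (Ioo (-1 : ℝ) 0) :=
    ((continuousOn_neg.rpow_const fun s hs => Or.inl (neg_ne_zero.mpr hs.2.ne)).mul
      hf).mono Ioo_subset_Ico_self
  have hint : IntegrableOn (fun s : ℝ => (-s) ^ a * f s) (Ioo (-1 : ℝ) 0) :=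
    ((integrableOn_Ioo_neg_rpow (by linarith) _).const_mul A).mono'
      (hcont.aestronglyMeasurable measurableSet_Ioo)
      (ae_restrict_of_forall_mem measurableSet_Ioo fun s hs =>
        hbound s (Ioo_subset_Ico_self hs))
  intro u hu
  rw [eq_add_setIntegral_Ioo_sub_setIntegral_Ioo (g := fun v => (-v) ^ a * y v)
    (fun v hv => (hy v hv).neg_rpow_mul hv.2) hint hu]
  simp only [neg_neg, Real.one_rpow, one_mul]
  rw [sub_sub_cancel_left, abs_neg]
  exact abs_setIntegral_Ioo_le_of_abs_le_rpow ha hu.2.le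
    fun s hs => hbound s ⟨hu.1.trans hs.1.le, hs.2⟩

section WeightedLimit

variable {a B c : ℝ} {y : ℝ → ℝ}

theorem tendsto_neg_rpow_mul_of_abs_sub_le (ha : 1 < a)
    (hest : ∀ u ∈ Ico (-1 : ℝ) 0, |(-u) ^ a * y u - c| ≤ B * (-u) ^ (a - 1)) :
    Tendsto (fun u => (-u) ^ a * y u) (𝓝[<] 0) (𝓝 c) := by
  have hrate : Tendsto (fun u : ℝ => B * (-u) ^ (a - 1)) (𝓝[<] 0) (𝓝 0) := by
    have h := ((continuous_neg.rpow_const fun _ => Or.inr (sub_pos.mpr ha).le).const_mul B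
      |>.tendsto 0).mono_left (nhdsWithin_le_nhds (s := Iio 0))
    simpa [Real.zero_rpow (sub_pos.mpr ha).ne'] using h
  rw [tendsto_iff_norm_sub_tendsto_zero]
  refine squeeze_zero' (Eventually.of_forall fun _ => norm_nonneg _) ?_ hrate
  filter_upwards [Ioo_mem_nhdsLT (show (-1 : ℝ) < 0 by norm_num)] with u hu
  exact hest u (Ioo_subset_Ico_self hu)

theorem abs_neg_rpow_mul_eq {u : ℝ} (hu : u < 0) (x : ℝ) :
    |(-u) ^ a * x| = (-u) ^ (a - 1) * |u * x| := by
  have hnu : 0 < -u := neg_pos.mpr hu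
  rw [abs_mul, abs_mul, abs_of_pos (Real.rpow_pos_of_pos hnu a), abs_of_neg hu,
    Real.rpow_sub_one hnu.ne']
  field_simp [hu.ne]

theorem abs_le_mul_abs_inv_of_abs_neg_rpow_mul_le
    (hest : ∀ u ∈ Ico (-1 : ℝ) 0, |(-u) ^ a * y u| ≤ B * (-u) ^ (a - 1)) :
    ∀ u ∈ Ico (-1 : ℝ) 0, |y u| ≤ B * |u|⁻¹ := by
  intro u hu
  have hpos : 0 < (-u) ^ (a - 1) := Real.rpow_pos_of_pos (neg_pos.mpr hu.2) _
  rw [le_mul_inv_iff₀ (abs_pos.mpr hu.2.ne), mul_comm, ← abs_mul]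
  refine le_of_mul_le_mul_left ?_ hpos
  rw [← abs_neg_rpow_mul_eq hu.2, mul_comm _ B]
  exact hest u hu

theorem exists_abs_mul_le_iff_eq_zero (ha : 1 < a)
    (hest : ∀ u ∈ Ico (-1 : ℝ) 0, |(-u) ^ a * y u - c| ≤ B * (-u) ^ (a - 1)) :
    (∃ C : ℝ, ∀ u ∈ Ico (-1 : ℝ) 0, |u * y u| ≤ C) ↔ c = 0 := by
  constructor
  · rintro ⟨C, hC⟩
    -- a bound `|u y u| ≤ C` is an estimate of the same shape with limit `0`
    refine tendsto_nhds_unique (tendsto_neg_rpow_mul_of_abs_sub_le ha hest)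
      (tendsto_neg_rpow_mul_of_abs_sub_le (B := C) ha fun u hu => ?_)
    rw [sub_zero, abs_neg_rpow_mul_eq hu.2, mul_comm C]
    exact mul_le_mul_of_nonneg_left (hC u hu) (Real.rpow_nonneg (neg_nonneg.mpr hu.2.le) _)
  · rintro rfl
    refine ⟨B, fun u hu => ?_⟩
    have h := abs_le_mul_abs_inv_of_abs_neg_rpow_mul_le (by simpa using hest) u hu
    rwa [le_mul_inv_iff₀ (abs_pos.mpr hu.2.ne), mul_comm, ← abs_mul] at h

theorem limsup_abs_rpow_mul_abs_eq (ha : 1 < a)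
    (hest : ∀ u ∈ Ico (-1 : ℝ) 0, |(-u) ^ a * y u - c| ≤ B * (-u) ^ (a - 1)) :
    limsup (fun u => |u| ^ a * |y u|) (𝓝[<] 0) = |c| := by
  rw [← (tendsto_neg_rpow_mul_of_abs_sub_le ha hest).abs.limsup_eq]
  refine limsup_congr ?_
  filter_upwards [self_mem_nhdsWithin] with u (hu : u < 0)
  rw [abs_mul, abs_of_neg hu, abs_of_pos (Real.rpow_pos_of_pos (neg_pos.mpr hu) a)]

end WeightedLimit

theorem ode_fine_tuning_general (a A : ℝ) (ha : 1 < a)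
    (f : ℝ → ℝ) (hf : ContinuousOn f (Ico (-1 : ℝ) 0))
    (hfb : ∀ u ∈ Ico (-1 : ℝ) 0, |f u| ≤ A / u ^ 2)
    (y : ℝ → ℝ)
    (hy : ∀ u ∈ Ico (-1 : ℝ) 0,
      HasDerivWithinAt y (f u - a / u * y u) (Ico (-1 : ℝ) 0) u) :
    ((∃ C : ℝ, ∀ u ∈ Ico (-1 : ℝ) 0, |u * y u| ≤ C) ↔
        y (-1) = -∫ s in Ioo (-1 : ℝ) 0, (-s) ^ a * f s) ∧
    (y (-1) = -∫ s in Ioo (-1 : ℝ) 0, (-s) ^ a * f s →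
        ∀ u ∈ Ico (-1 : ℝ) 0, |y u| ≤ A / (a - 1) * |u|⁻¹) ∧
    (y (-1) ≠ -∫ s in Ioo (-1 : ℝ) 0, (-s) ^ a * f s →
        0 < Filter.limsup (fun u => |u| ^ a * |y u|) (nhdsWithin 0 (Iio (0 : ℝ)))) := by
  have hest := abs_neg_rpow_mul_sub_le_of_hasDerivWithinAt ha hf hfb hy
  refine ⟨(exists_abs_mul_le_iff_eq_zero ha hest).trans eq_neg_iff_add_eq_zero.symm,
    fun h0 => abs_le_mul_abs_inv_of_abs_neg_rpow_mul_le (a := a) ?_, fun h0 => ?_⟩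
  · simpa [eq_neg_iff_add_eq_zero.mp h0] using hest
  · rw [limsup_abs_rpow_mul_abs_eq ha hest]
    exact abs_pos.mpr (mt eq_neg_iff_add_eq_zero.mpr h0)

/-- Fine-tuning of initial data for the ODE `y' + (a/u) y = f` on `[-1, 0)`:
the solution stays bounded by the self-similar rate `|u|⁻¹` if and only if
`y(-1) = -∫_{-1}^0 (-s)^a f(s) ds`, and for any other initial value the solution
blows up at the rate `|u|^{-a}`. -/
theorem ode_fine_tuning (a A : ℝ) (ha : 1 < a) (hA : 0 ≤ A)
    (f : ℝ → ℝ) (hf : ContinuousOn f (Ico (-1 : ℝ) 0))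
    (hfb : ∀ u ∈ Ico (-1 : ℝ) 0, |f u| ≤ A / u ^ 2)
    (y : ℝ → ℝ)
    (hy : ∀ u ∈ Ico (-1 : ℝ) 0,
      HasDerivWithinAt y (f u - a / u * y u) (Ico (-1 : ℝ) 0) u) :
    ((∃ C : ℝ, ∀ u ∈ Ico (-1 : ℝ) 0, |u * y u| ≤ C) ↔
        y (-1) = -∫ s in Ioo (-1 : ℝ) 0, (-s) ^ a * f s) ∧
    (y (-1) = -∫ s in Ioo (-1 : ℝ) 0, (-s) ^ a * f s →
        ∀ u ∈ Ico (-1 : ℝ) 0, |y u| ≤ A / (a - 1) * |u|⁻¹) ∧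
    (y (-1) ≠ -∫ s in Ioo (-1 : ℝ) 0, (-s) ^ a * f s →
        0 < Filter.limsup (fun u => |u| ^ a * |y u|) (nhdsWithin 0 (Iio (0 : ℝ)))) :=
  ode_fine_tuning_general a A ha f hf hfb y hy
end
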